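/- Let X ~ N(μ_n, σ²/N_n) where μ_n < γ for all n, N_n → ∞ with N_n ≤ n, and μ_n → μ < γ. Then P(X > γ) is logarithmically equivalent to exp(−(γ−μ_n)²·N_n/(2σ²)), i.e., lim_{n→∞} (1/n) log( P(X_n > γ) / exp(−(γ−μ_n)²/(2σ²/N_n)) ) = 0. -/

import Mathlib

/-!
Put `t = (γ - μ_n) √N_n / σ`, the distance from the mean to `γ` in standard deviations. The
Chernoff bound gives `P(X_n > γ) ≤ exp (-t² / 2)`, and since the density decreases to the right of
the mean, the mass of `(γ, γ + σ / √N_n]` gives `P(X_n > γ) ≥ exp (-(t + 1)² / 2) / √(2π)`. So the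
logarithm of the ratio lies between `-t - O(1)` and `0`, and `t = O(√n)` because `N_n ≤ n`.
-/

open Filter Real MeasureTheory ProbabilityTheory
open Set
open scoped NNReal Topology

namespace ProbabilityTheory

lemma hasSubgaussianMGF_sub_gaussianReal (m : ℝ) (v : ℝ≥0) :
    HasSubgaussianMGF (fun x ↦ x - m) v (gaussianReal m v) where
  integrable_exp_mul t := by
    simpa [mul_sub, exp_sub] using (integrable_exp_mul_gaussianReal t).div_const (rexp (t * m))
  mgf_le t := by
    rw [mgf_gaussianReal (by simpa using gaussianReal_map_sub_const m)]
    simp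

lemma gaussianReal_real_Ioi_le {m c : ℝ} {v : ℝ≥0} (hmc : m ≤ c) :
    (gaussianReal m v).real (Ioi c) ≤ rexp (-(c - m) ^ 2 / (2 * v)) :=
  calc (gaussianReal m v).real (Ioi c)
      ≤ (gaussianReal m v).real {x | c - m ≤ x - m} :=
        measureReal_mono fun x hx ↦ by simp only [mem_ofPred_eq]; linarith [mem_Ioi.mp hx]
    _ ≤ _ := (hasSubgaussianMGF_sub_gaussianReal m v).measure_ge_le (sub_nonneg.mpr hmc)

lemma gaussianPDFReal_antitoneOn (m : ℝ) (v : ℝ≥0) :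
    AntitoneOn (gaussianPDFReal m v) (Ici m) := by
  intro x hx y _ hxy
  simp only [gaussianPDFReal]
  gcongr
  exact sub_nonneg.mpr hx

lemma mul_gaussianPDFReal_le_gaussianReal_real_Ioc {m a b : ℝ} {v : ℝ≥0} (hv : v ≠ 0)
    (hma : m ≤ a) (hab : a ≤ b) :
    (b - a) * gaussianPDFReal m v b ≤ (gaussianReal m v).real (Ioc a b) := by
  rw [measureReal_def, gaussianReal_apply_eq_integral m hv, ENNReal.toReal_ofReal
    (setIntegral_nonneg measurableSet_Ioc fun x _ ↦ gaussianPDFReal_nonneg m v x)]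
  calc (b - a) * gaussianPDFReal m v b = ∫ _ in Ioc a b, gaussianPDFReal m v b := by
        simp [hab]
    _ ≤ ∫ x in Ioc a b, gaussianPDFReal m v x :=
        setIntegral_mono_on (integrableOn_const measure_Ioc_lt_top.ne)
          (integrable_gaussianPDFReal m v).integrableOn measurableSet_Ioc fun x hx ↦
            gaussianPDFReal_antitoneOn m v (mem_Ici.mpr (hma.trans hx.1.le))
              (mem_Ici.mpr (hma.trans hab)) hx.2

lemma exp_div_sqrt_two_pi_le_gaussianReal_real_Ioi {m c : ℝ} {v : ℝ≥0} (hv : v ≠ 0)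
    (hmc : m ≤ c) :
    rexp (-(c - m + √v) ^ 2 / (2 * v)) / √(2 * π) ≤ (gaussianReal m v).real (Ioi c) :=
  calc rexp (-(c - m + √v) ^ 2 / (2 * v)) / √(2 * π)
      = (c + √v - c) * gaussianPDFReal m v (c + √v) := by
        have : 0 < √(v : ℝ) := by positivity
        rw [add_sub_cancel_left, gaussianPDFReal, sqrt_mul (by positivity) (v : ℝ),
          show c + √v - m = c - m + √v by ring]
        field_simp
    _ ≤ (gaussianReal m v).real (Ioc c (c + √v)) :=
        mul_gaussianPDFReal_le_gaussianReal_real_Ioc hv hmc (by simp)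
    _ ≤ (gaussianReal m v).real (Ioi c) := measureReal_mono Ioc_subset_Ioi_self

lemma log_gaussianReal_real_Ioi_div_exp_mem_Icc {m c : ℝ} {v : ℝ≥0} (hv : v ≠ 0) (hmc : m ≤ c) :
    log ((gaussianReal m v).real (Ioi c) / rexp (-(c - m) ^ 2 / (2 * v))) ∈
      Icc (-((c - m) / √v) - (1 / 2 + log √(2 * π))) 0 := by
  have hs : 0 < √(v : ℝ) := by positivity
  have hlower := exp_div_sqrt_two_pi_le_gaussianReal_real_Ioi hv hmc
  have hlog_lower : log (rexp (-(c - m + √v) ^ 2 / (2 * v)) / √(2 * π) /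
      rexp (-(c - m) ^ 2 / (2 * v))) = -((c - m) / √v) - (1 / 2 + log √(2 * π)) := by
    rw [div_right_comm, ← exp_sub, log_div (by positivity) (by positivity), log_exp]
    have hv2 : (v : ℝ) = √v ^ 2 := (sq_sqrt v.coe_nonneg).symm
    generalize √(v : ℝ) = s at hs hv2 ⊢
    rw [hv2]
    field_simp
    ring
  constructor
  · rw [← hlog_lower]
    exact log_le_log (by positivity) (by gcongr)
  · exact log_nonpos (by positivity)
      ((div_le_one (exp_pos _)).mpr (gaussianReal_real_Ioi_le hmc))

end ProbabilityTheory

lemma tendsto_one_div_mul_of_abs_le_mul_sqrt {r : ℕ → ℝ} {K : ℝ}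
    (h : ∀ᶠ n in atTop, |r n| ≤ K * √n) :
    Tendsto (fun n : ℕ ↦ 1 / (n : ℝ) * r n) atTop (𝓝 0) := by
  refine squeeze_zero_norm' ?_
    ((tendsto_const_nhds (x := K)).div_atTop (tendsto_sqrt_atTop.comp tendsto_natCast_atTop_atTop))
  filter_upwards [h, eventually_gt_atTop 0] with n hn hn0
  have hsqrt : 0 < √(n : ℝ) := by positivity
  calc ‖1 / (n : ℝ) * r n‖ = |r n| / (√n * √n) := by
        rw [mul_self_sqrt n.cast_nonneg, norm_mul, norm_div, norm_one, Real.norm_natCast,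
          Real.norm_eq_abs, one_div_mul_eq_div]
    _ ≤ K * √n / (√n * √n) := by gcongr
    _ = K / √n := by field_simp

theorem gaussian_tail_logEquiv_general (γ σ μinf : ℝ) (hσ : 0 < σ) (μ : ℕ → ℝ) (N : ℕ → ℕ)
    (hμ : Tendsto μ atTop (nhds μinf)) (hμinf : μinf < γ)
    (hN : Tendsto N atTop atTop) (hNn : ∀ n, N n ≤ n) :
    Tendsto (fun n : ℕ => (1 / (n : ℝ)) *
      Real.log (((gaussianReal (μ n) ((σ ^ 2 / (N n : ℝ)).toNNReal)) (Set.Ioi γ)).toReal /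
        Real.exp (-(γ - μ n) ^ 2 / (2 * σ ^ 2 / (N n : ℝ))))) atTop (nhds 0) := by
  set C := 1 / 2 + log √(2 * π) with hC_def
  refine tendsto_one_div_mul_of_abs_le_mul_sqrt (K := (γ - μinf + 1) / σ + |C|) ?_
  filter_upwards [hμ (Ioo_mem_nhds (sub_one_lt μinf) hμinf), hN.eventually_ge_atTop 1,
    eventually_ge_atTop 1] with n ⟨hμ_gt, hμ_lt⟩ hN_pos hn_pos
  have hN_pos' : (0 : ℝ) < N n := by exact_mod_cast hN_pos
  set v := (σ ^ 2 / (N n : ℝ)).toNNReal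
  have hv : (v : ℝ) = σ ^ 2 / N n := coe_toNNReal _ (by positivity)
  have hv0 : v ≠ 0 := NNReal.coe_ne_zero.mp (by rw [hv]; positivity)
  have ht : (γ - μ n) / √v ≤ (γ - μinf + 1) / σ * √n := by
    rw [hv, sqrt_div' _ hN_pos'.le, sqrt_sq hσ.le, div_div_eq_mul_div, div_mul_eq_mul_div]
    gcongr
    · linarith
    · exact_mod_cast hNn n
  have hn_sqrt : 1 ≤ √(n : ℝ) := one_le_sqrt.mpr (by exact_mod_cast hn_pos)
  obtain ⟨hlower, hupper⟩ := log_gaussianReal_real_Ioi_div_exp_mem_Icc hv0 hμ_lt.le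
  rw [← hC_def] at hlower
  rw [← measureReal_def, mul_div_assoc, ← hv, abs_le]
  have hC : C ≤ |C| * √n := (le_abs_self C).trans (le_mul_of_one_le_right (abs_nonneg C) hn_sqrt)
  have hK : 0 ≤ (γ - μinf + 1) / σ + |C| := by positivity
  constructor <;> nlinarith

theorem gaussian_tail_logEquiv (γ σ μinf : ℝ) (hσ : 0 < σ) (μ : ℕ → ℝ) (N : ℕ → ℕ)
    (hμγ : ∀ n, μ n < γ) (hμ : Tendsto μ atTop (nhds μinf)) (hμinf : μinf < γ)
    (hN : Tendsto N atTop atTop) (hNn : ∀ n, N n ≤ n) :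
    Tendsto (fun n : ℕ => (1 / (n : ℝ)) *
      Real.log (((gaussianReal (μ n) ((σ ^ 2 / (N n : ℝ)).toNNReal)) (Set.Ioi γ)).toReal /
        Real.exp (-(γ - μ n) ^ 2 / (2 * σ ^ 2 / (N n : ℝ))))) atTop (nhds 0) :=
  gaussian_tail_logEquiv_general γ σ μinf hσ μ N hμ hμinf hN hNn
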